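/- arXiv:1108.4382 — 4 statements merged into one kernel-verified Lean document; each statement's English description precedes it below -/
import Mathlib

section
/- For finite sets A, B of real numbers, and for every real s let A_s = A ∩ (A + s). Then the number of representations of t as a difference of two elements of A_s equals the number of representations of s as a difference of two elements of A_t; both equal |A ∩ (A+s) ∩ (A+t) ∩ (A+s+t)|. -/
open Finset Pointwise

/-- `A + s` as a finset: the shift of `A` by `s`. -/
noncomputable def shiftSet (A : Finset ℝ) (s : ℝ) : Finset ℝ := A.image (· + s)

/-- `A_s = A ∩ (A + s)`. -/
noncomputable def Asub (A : Finset ℝ) (s : ℝ) : Finset ℝ := A ∩ shiftSet A s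

/-- `δ_{X,Y}(s)`: number of pairs `(x,y) ∈ X × Y` with `x - y = s`. -/
noncomputable def dXY (X Y : Finset ℝ) (s : ℝ) : ℕ :=
  ((X ×ˢ Y).filter (fun p => p.1 - p.2 = s)).card

lemma mem_shiftSet {A : Finset ℝ} {s x : ℝ} : x ∈ shiftSet A s ↔ x - s ∈ A := by
  simp only [shiftSet, mem_image]
  exact ⟨fun ⟨a, ha, hx⟩ => by rwa [← hx, add_sub_cancel_right],
    fun h => ⟨x - s, h, sub_add_cancel x s⟩⟩

lemma shiftSet_inter (X Y : Finset ℝ) (s : ℝ) :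
    shiftSet (X ∩ Y) s = shiftSet X s ∩ shiftSet Y s :=
  image_inter X Y (add_left_injective s)

lemma shiftSet_shiftSet (A : Finset ℝ) (s t : ℝ) :
    shiftSet (shiftSet A s) t = shiftSet A (s + t) := by
  ext x
  simp only [mem_shiftSet, sub_sub, add_comm t s]

/-- A pair `(x, y)` with `x - y = t` is determined by `x`, which ranges over `X ∩ (Y + t)`. -/
lemma dXY_eq_card_inter_shiftSet (X Y : Finset ℝ) (t : ℝ) :
    dXY X Y t = (X ∩ shiftSet Y t).card := by
  refine card_nbij' Prod.fst (fun x => (x, x - t)) ?_ ?_ ?_ ?_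
  · rintro ⟨x, y⟩ hp
    simp only [coe_filter, mem_product, Set.mem_ofPred_eq] at hp
    obtain ⟨⟨hx, hy⟩, rfl⟩ := hp
    simpa [mem_shiftSet] using And.intro hx hy
  · intro x hx
    simp only [coe_inter, Set.mem_inter_iff, mem_coe, mem_shiftSet] at hx
    simpa using hx
  · rintro ⟨x, y⟩ hp
    simp only [coe_filter, Set.mem_ofPred_eq] at hp
    simp [← hp.2]
  · intro x _
    rfl

lemma dXY_Asub_self (A : Finset ℝ) (s t : ℝ) :
    dXY (Asub A s) (Asub A s) t =
      (A ∩ shiftSet A s ∩ shiftSet A t ∩ shiftSet A (s + t)).card := by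
  rw [dXY_eq_card_inter_shiftSet, Asub, shiftSet_inter, shiftSet_shiftSet,
    inter_assoc _ (shiftSet A t)]

theorem stmt0_general (A : Finset ℝ) (s t : ℝ) :
    dXY (Asub A s) (Asub A s) t = dXY (Asub A t) (Asub A t) s ∧
    dXY (Asub A s) (Asub A s) t =
      (A ∩ shiftSet A s ∩ shiftSet A t ∩ shiftSet A (s + t)).card := by
  refine ⟨?_, dXY_Asub_self A s t⟩
  rw [dXY_Asub_self, dXY_Asub_self, add_comm t s, inter_right_comm A]

theorem stmt0 (A B : Finset ℝ) (s t : ℝ) :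
    dXY (Asub A s) (Asub A s) t = dXY (Asub A t) (Asub A t) s ∧
    dXY (Asub A s) (Asub A s) t =
      (A ∩ shiftSet A s ∩ shiftSet A t ∩ shiftSet A (s + t)).card :=
  stmt0_general A s t
end

section
/- For finite sets A, B of real numbers, ∑_s E(A_s, B) ≤ E_3(A)^{2/3} · E_3(B)^{1/3}, where the sum is over all s ∈ A − A. -/
/-!
Double counting gives `∑_{s ∈ A - A} δ_{A_s}(t) = δ_A(t)²`, so the left-hand side equals
`∑_t δ_A(t)² δ_B(t)`. Hölder's inequality with exponents `3/2` and `3` bounds this by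
`E_3(A)^{2/3} (∑_{t ∈ A - A} δ_B(t)³)^{1/3} ≤ E_3(A)^{2/3} E_3(B)^{1/3}`.
-/

open Finset Pointwise

/-- `E(X,Y) = ∑_s δ_X(s) δ_Y(s)`. -/
noncomputable def energy (X Y : Finset ℝ) : ℝ :=
  ∑ s ∈ X - X, (dXY X X s : ℝ) * (dXY Y Y s : ℝ)

/-- `E_3(X) = ∑_s δ_X(s)^3`. -/
noncomputable def energy3 (X : Finset ℝ) : ℝ :=
  ∑ s ∈ X - X, (dXY X X s : ℝ) ^ 3

lemma mem_Asub {A : Finset ℝ} {s x : ℝ} : x ∈ Asub A s ↔ x ∈ A ∧ x - s ∈ A := by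
  simp only [Asub, shiftSet, mem_inter, mem_image, and_congr_right_iff]
  exact fun _ => ⟨by rintro ⟨a, ha, rfl⟩; simpa, fun h => ⟨x - s, h, by ring⟩⟩

lemma Asub_subset (A : Finset ℝ) (s : ℝ) : Asub A s ⊆ A := inter_subset_left

lemma dXY_eq_zero_of_notMem_sub {X Y : Finset ℝ} {t : ℝ} (h : t ∉ X - Y) : dXY X Y t = 0 := by
  rw [dXY, card_eq_zero, filter_eq_empty_iff]
  rintro ⟨x, y⟩ hxy rfl
  exact h (sub_mem_sub (mem_product.mp hxy).1 (mem_product.mp hxy).2)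

/- A pair `(x, y)` of `A_s` with difference `t` is the same as two pairs `(x, y)`, `(x - s, y - s)`
of `A` with difference `t`; `s` is recovered as `x - (x - s)`. -/
lemma sum_dXY_Asub (A : Finset ℝ) (t : ℝ) :
    ∑ s ∈ A - A, dXY (Asub A s) (Asub A s) t = dXY A A t ^ 2 := by
  simp only [dXY, sq, ← card_product, ← card_sigma]
  refine card_nbij' (fun x => ((x.2.1, x.2.2), (x.2.1 - x.1, x.2.2 - x.1)))
    (fun y => ⟨y.1.1 - y.2.1, y.1⟩) ?_ ?_ ?_ ?_
  all_goals
    simp only [Set.MapsTo, Set.LeftInvOn, mem_coe, mem_sigma, mem_filter, mem_product, mem_Asub,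
      mem_sub, Prod.forall, Sigma.forall, Prod.mk.injEq, Sigma.mk.injEq]
    grind

lemma energy_eq_sum_of_subset {X A : Finset ℝ} (h : X ⊆ A) (B : Finset ℝ) :
    energy X B = ∑ t ∈ A - A, (dXY X X t : ℝ) * dXY B B t :=
  sum_subset (sub_subset_sub h h) fun t _ ht => by simp [dXY_eq_zero_of_notMem_sub ht]

lemma sum_energy_Asub (A B : Finset ℝ) :
    ∑ s ∈ A - A, energy (Asub A s) B = ∑ t ∈ A - A, (dXY A A t : ℝ) ^ 2 * dXY B B t := by
  rw [sum_congr rfl fun s _ => energy_eq_sum_of_subset (Asub_subset A s) B, sum_comm]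
  refine sum_congr rfl fun t _ => ?_
  rw [← sum_mul, ← Nat.cast_sum, sum_dXY_Asub, Nat.cast_pow]

lemma sum_sq_mul_le {ι : Type*} (s : Finset ι) {f g : ι → ℝ} (hf : ∀ i ∈ s, 0 ≤ f i)
    (hg : ∀ i ∈ s, 0 ≤ g i) :
    ∑ i ∈ s, f i ^ 2 * g i ≤
      (∑ i ∈ s, f i ^ 3) ^ ((2 : ℝ) / 3) * (∑ i ∈ s, g i ^ 3) ^ ((1 : ℝ) / 3) := by
  have hpq : (3 / 2 : ℝ).HolderConjugate 3 := Real.holderConjugate_iff.mpr ⟨by norm_num, by norm_num⟩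
  have hf3 : ∑ i ∈ s, f i ^ 3 = ∑ i ∈ s, (f i ^ 2) ^ (3 / 2 : ℝ) := sum_congr rfl fun i hi => by
    rw [← Real.rpow_natCast, ← Real.rpow_natCast, ← Real.rpow_mul (hf i hi)]
    norm_num
  have hg3 : ∑ i ∈ s, g i ^ 3 = ∑ i ∈ s, g i ^ (3 : ℝ) := sum_congr rfl fun i _ => by
    exact_mod_cast (Real.rpow_natCast (g i) 3).symm
  rw [hf3, hg3, show (2 : ℝ) / 3 = 1 / (3 / 2) by norm_num]
  exact Real.inner_le_Lp_mul_Lq_of_nonneg s hpq (fun i _ => sq_nonneg (f i)) hg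

lemma sum_dXY_cube_le_energy3 (B S : Finset ℝ) : ∑ t ∈ S, (dXY B B t : ℝ) ^ 3 ≤ energy3 B := by
  rw [energy3]
  exact_mod_cast sum_le_sum_of_ne_zero fun t _ ht =>
    by_contra fun h => ht (by simp [dXY_eq_zero_of_notMem_sub h])

theorem stmt2 (A B : Finset ℝ) :
    ∑ s ∈ A - A, energy (Asub A s) B ≤
      energy3 A ^ ((2 : ℝ) / 3) * energy3 B ^ ((1 : ℝ) / 3) := by
  rw [sum_energy_Asub]
  calc _ ≤ energy3 A ^ ((2 : ℝ) / 3) * (∑ t ∈ A - A, (dXY B B t : ℝ) ^ 3) ^ ((1 : ℝ) / 3) :=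
        sum_sq_mul_le _ (fun _ _ => by positivity) fun _ _ => by positivity
    _ ≤ _ := by
        gcongr
        · exact Real.rpow_nonneg (sum_nonneg fun _ _ => by positivity) _
        · exact sum_dXY_cube_le_energy3 B _
end

section
/- Suppose A is a finite set of reals such that for every finite set B ⊆ ℝ and every real τ ≥ 1, |{x ∈ A − B : δ_{A,B}(x) ≥ τ}| ≤ K · |A| · |B|² / τ³ for some constant K ≥ 1. Then for every finite nonempty set B, E(A, B) ≤ C · K^{1/2} · |A| · |B|^{3/2} for an absolute constant C. -/
/-!
By the layer-cake formula, `E(A,B) = ∑ₛ δ(s)² ≤ 2 ∑_{j ≥ 1} j · #{s : δ(s) ≥ j}`.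
For `j ≤ T` each term is at most `∑ₛ δ(s) = |A||B|`, while for `j > T` the hypothesis gives
`j · #{δ ≥ j} ≤ K|A||B|²/j²`, and these terms sum to `O(K|A||B|²/T)`.
Choosing `T ≈ √(K|B|)` balances the two parts and yields `E(A,B) ≤ 6 √K |A| |B|^{3/2}`.
-/

open Finset Pointwise

/-- `E(X,Y) = ∑_s δ_{X,Y}(s)^2`. -/
noncomputable def energyXY (X Y : Finset ℝ) : ℝ :=
  ∑ s ∈ X - Y, (dXY X Y s : ℝ) ^ 2

theorem sum_dXY (A B : Finset ℝ) : ∑ s ∈ A - B, dXY A B s = #A * #B := by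
  rw [← card_product]
  exact (card_eq_sum_card_fiberwise fun p hp =>
    sub_mem_sub (mem_product.mp hp).1 (mem_product.mp hp).2).symm

theorem dXY_le_card_right (A B : Finset ℝ) (s : ℝ) : dXY A B s ≤ #B := by
  refine card_le_card_of_injOn Prod.snd (fun p hp => (mem_product.mp (mem_filter.mp hp).1).2) ?_
  intro p hp q hq hpq
  have hp' := (mem_filter.mp hp).2
  have hq' := (mem_filter.mp hq).2
  exact Prod.ext (by linarith) hpq

theorem sq_le_two_mul_sum_Icc (d : ℕ) : d ^ 2 ≤ 2 * ∑ j ∈ Icc 1 d, j := by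
  induction d with
  | zero => simp
  | succ n ih =>
    rw [sum_Icc_succ_top (by omega)]
    nlinarith

theorem mul_card_filter_le_sum {α : Type*} (S : Finset α) (f : α → ℕ) (j : ℕ) :
    j * #{s ∈ S | j ≤ f s} ≤ ∑ s ∈ S, f s :=
  calc j * #{s ∈ S | j ≤ f s}
      ≤ ∑ s ∈ S with j ≤ f s, f s := by
        rw [mul_comm, ← smul_eq_mul]
        exact card_nsmul_le_sum _ _ _ fun s hs => (mem_filter.mp hs).2
    _ ≤ ∑ s ∈ S, f s := sum_le_sum_of_subset (filter_subset _ _)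

theorem sum_sq_le_two_mul_sum_mul_card_filter {α : Type*} (S : Finset α) (f : α → ℕ) {M : ℕ}
    (hf : ∀ s ∈ S, f s ≤ M) :
    ∑ s ∈ S, f s ^ 2 ≤ 2 * ∑ j ∈ Icc 1 M, j * #{s ∈ S | j ≤ f s} := by
  have hlayer : ∀ s ∈ S, ∑ j ∈ Icc 1 (f s), j = ∑ j ∈ Icc 1 M with j ≤ f s, j := by
    intro s hs
    congr 1
    ext j
    simp only [mem_Icc, mem_filter]
    have := hf s hs
    omega
  calc ∑ s ∈ S, f s ^ 2
      ≤ ∑ s ∈ S, 2 * ∑ j ∈ Icc 1 (f s), j := sum_le_sum fun s _ => sq_le_two_mul_sum_Icc _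
    _ = 2 * ∑ j ∈ Icc 1 M, j * #{s ∈ S | j ≤ f s} := by
      rw [← mul_sum, sum_congr rfl fun s hs => by rw [hlayer s hs, sum_filter], sum_comm]
      congr 1
      refine sum_congr rfl fun j _ => ?_
      rw [← sum_filter, sum_const, smul_eq_mul, mul_comm]

theorem sum_Icc_mul_le_of_tail_bound (c : ℕ → ℝ) {P Q : ℝ} (hQ : 0 ≤ Q)
    (hP : ∀ j : ℕ, j * c j ≤ P) (htail : ∀ j : ℕ, 1 ≤ j → c j ≤ Q / j ^ 3)
    (T M : ℕ) :
    ∑ j ∈ Icc 1 M, j * c j ≤ T * P + 2 * Q / (T + 1) := by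
  rw [← sum_filter_add_sum_filter_not _ (· ≤ T)]
  gcongr
  · have hcard : #{j ∈ Icc 1 M | j ≤ T} ≤ T := by
      simpa using card_le_card (s := {j ∈ Icc 1 M | j ≤ T}) (t := Icc 1 T)
        fun j hj => by simp only [mem_filter, mem_Icc] at hj ⊢; omega
    calc ∑ j ∈ Icc 1 M with j ≤ T, j * c j
        ≤ #{j ∈ Icc 1 M | j ≤ T} • P := sum_le_card_nsmul _ _ _ fun j _ => hP j
      _ ≤ T * P := by
        rw [nsmul_eq_mul]
        exact mul_le_mul_of_nonneg_right (by exact_mod_cast hcard) ((hP 0).trans' (by simp))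
  · calc ∑ j ∈ Icc 1 M with ¬j ≤ T, j * c j
        ≤ ∑ j ∈ Icc 1 M with ¬j ≤ T, Q * ((j : ℝ) ^ 2)⁻¹ := by
          refine sum_le_sum fun j hj => ?_
          have hj : 1 ≤ j := (mem_Icc.mp (mem_filter.mp hj).1).1
          have hj0 : (0 : ℝ) < j := by exact_mod_cast hj
          calc j * c j ≤ j * (Q / j ^ 3) := mul_le_mul_of_nonneg_left (htail j hj) hj0.le
            _ = Q * ((j : ℝ) ^ 2)⁻¹ := by field_simp
      _ ≤ Q * ∑ j ∈ Ioo T (M + 1), ((j : ℝ) ^ 2)⁻¹ := by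
          rw [← mul_sum]
          refine mul_le_mul_of_nonneg_left (sum_le_sum_of_subset_of_nonneg ?_ ?_) hQ
          · intro j hj
            simp only [mem_filter, mem_Icc, mem_Ioo] at hj ⊢
            omega
          · intros; positivity
      _ ≤ Q * (2 / (T + 1)) := mul_le_mul_of_nonneg_left (sum_Ioo_inv_sq_le T (M + 1)) hQ
      _ = 2 * Q / (T + 1) := by ring

-- `T = ⌊√R⌋` balances the two terms of `sum_Icc_mul_le_of_tail_bound`.
theorem exists_nat_mul_add_div_le (P R : ℝ) (hP : 0 ≤ P) (hR : 0 ≤ R) :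
    ∃ T : ℕ, T * P + 2 * (P * R) / (T + 1) ≤ 3 * P * √R := by
  refine ⟨⌊√R⌋₊, ?_⟩
  have hfloor : (⌊√R⌋₊ : ℝ) ≤ √R := Nat.floor_le (Real.sqrt_nonneg R)
  have hsucc : √R < ⌊√R⌋₊ + 1 := Nat.lt_floor_add_one _
  have hR_le : R ≤ √R * (⌊√R⌋₊ + 1) := by
    calc R = √R * √R := (Real.mul_self_sqrt hR).symm
      _ ≤ √R * (⌊√R⌋₊ + 1) := mul_le_mul_of_nonneg_left hsucc.le (Real.sqrt_nonneg R)
  have hdiv : 2 * (P * R) / (⌊√R⌋₊ + 1) ≤ 2 * P * √R := by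
    rw [div_le_iff₀ (by positivity)]
    nlinarith
  nlinarith

theorem stmt12 :
    ∃ C : ℝ, C > 0 ∧ ∀ (A : Finset ℝ) (K : ℝ), K ≥ 1 →
      (∀ (B : Finset ℝ) (τ : ℝ), τ ≥ 1 →
        (((A - B).filter (fun x => (dXY A B x : ℝ) ≥ τ)).card : ℝ) ≤
          K * (A.card : ℝ) * (B.card : ℝ) ^ 2 / τ ^ 3) →
      ∀ B : Finset ℝ, B.Nonempty →
        energyXY A B ≤ C * K ^ ((1 : ℝ) / 2) * (A.card : ℝ) * (B.card : ℝ) ^ ((3 : ℝ) / 2) := by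
  refine ⟨6, by norm_num, fun A K hK htail B _ => ?_⟩
  set cnt : ℕ → ℝ := fun j => (#{s ∈ A - B | j ≤ dXY A B s} : ℝ)
  have hE : energyXY A B ≤ 2 * ∑ j ∈ Icc 1 #B, j * cnt j := by
    have := sum_sq_le_two_mul_sum_mul_card_filter (A - B) (dXY A B)
      fun s _ => dXY_le_card_right A B s
    simp only [energyXY, cnt]
    exact_mod_cast this
  have hsmall : ∀ j : ℕ, j * cnt j ≤ #A * #B := fun j => by
    have := mul_card_filter_le_sum (A - B) (dXY A B) j
    rw [sum_dXY] at this
    simp only [cnt]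
    exact_mod_cast this
  have hlarge : ∀ j : ℕ, 1 ≤ j → cnt j ≤ (#A * #B) * (K * #B) / j ^ 3 := fun j hj => by
    rw [show ((#A : ℝ) * #B) * (K * #B) = K * #A * #B ^ 2 by ring]
    simpa only [cnt, ge_iff_le, Nat.cast_le] using htail B j (by exact_mod_cast hj)
  have hK0 : 0 ≤ K := by linarith
  obtain ⟨T, hT⟩ := exists_nat_mul_add_div_le (#A * #B) (K * #B) (by positivity) (by positivity)
  calc energyXY A B ≤ 2 * ∑ j ∈ Icc 1 #B, j * cnt j := hE
    _ ≤ 2 * (T * (#A * #B) + 2 * ((#A * #B) * (K * #B)) / (T + 1)) := by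
      gcongr
      exact sum_Icc_mul_le_of_tail_bound cnt (by positivity) hsmall hlarge T #B
    _ ≤ 2 * (3 * (#A * #B) * √(K * #B)) := by gcongr
    _ = 6 * K ^ ((1 : ℝ) / 2) * #A * (#B : ℝ) ^ ((3 : ℝ) / 2) := by
      rw [Real.sqrt_mul hK0, Real.sqrt_eq_rpow, Real.sqrt_eq_rpow,
        show (3 : ℝ) / 2 = 1 + 1 / 2 by norm_num, Real.rpow_add' (by positivity) (by norm_num),
        Real.rpow_one]
      ring
end

section
/- Suppose A is a finite set of reals with |A| ≥ 2 satisfying: (i) E_3(A) ≤ K·|A|³·log|A|, and (ii) E_{1.5}(A)² ≥ |A|⁶/|A−A|. If additionally E(A,B) ≤ K'·|A|·|B|^{3/2} for every finite set B, then |A−A|²·|A±A|³ ≥ c(K,K')·|A|⁸/(log|A|)². -/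
open Finset Pointwise

/-- `E_{1.5}(X) = ∑_s δ_X(s)^{3/2}`. -/
noncomputable def energy15 (X : Finset ℝ) : ℝ :=
  ∑ s ∈ X - X, (dXY X X s : ℝ) ^ ((3 : ℝ) / 2)

noncomputable def AS (A : Finset ℝ) (s : ℝ) : Finset ℝ := A.filter (fun a => a - s ∈ A)

lemma dxy_pair (X Y : Finset ℝ) (s : ℝ) :
    dXY X Y s = ∑ a ∈ X, ∑ b ∈ Y, if a - b = s then 1 else 0 := by
  rw [dXY, Finset.card_filter, Finset.sum_product]

lemma dxy_card (A : Finset ℝ) (s : ℝ) : dXY A A s = (AS A s).card := by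
  rw [dxy_pair, AS, Finset.card_filter]
  refine Finset.sum_congr rfl fun a _ => ?_
  have : ∀ b : ℝ, (if a - b = s then (1:ℕ) else 0) = if b = a - s then 1 else 0 := by
    intro b
    exact if_congr ⟨fun h => by linarith, fun h => by rw [h]; ring⟩ rfl rfl
  rw [Finset.sum_congr rfl fun b _ => this b, Finset.sum_ite_eq' A (a - s) (fun _ => 1)]

lemma dxy_neg (A : Finset ℝ) (t : ℝ) : dXY A A (-t) = dXY A A t := by
  rw [dxy_pair, dxy_pair, Finset.sum_comm]
  refine Finset.sum_congr rfl fun a _ => Finset.sum_congr rfl fun b _ => ?_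
  exact if_congr ⟨fun h => by linarith, fun h => by linarith⟩ rfl rfl

lemma mem_AS {A : Finset ℝ} {a s : ℝ} : a ∈ AS A s ↔ a ∈ A ∧ a - s ∈ A := by
  simp [AS]

lemma one_le_dxy {A : Finset ℝ} {s : ℝ} (hs : s ∈ A - A) : 1 ≤ dXY A A s := by
  rw [dxy_card]
  rw [Finset.mem_sub] at hs
  obtain ⟨a, ha, b, hb, hab⟩ := hs
  have : a ∈ AS A s := mem_AS.2 ⟨ha, by rw [← hab]; simpa using hb⟩
  exact Finset.card_pos.2 ⟨a, this⟩

lemma sum_sq_fibers {α β : Type*} [DecidableEq β] (T : Finset α) (f : α → β) :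
    ∑ x ∈ T.image f, ((T.filter (fun t => f t = x)).card)^2
      = ((T ×ˢ T).filter (fun p => f p.1 = f p.2)).card := by
  classical
  rw [Finset.card_eq_sum_card_fiberwise (f := fun p : α × α => f p.1)
    (t := T.image f) (fun p hp => by
      simp only [Finset.mem_coe, Finset.mem_filter, Finset.mem_product] at hp
      exact Finset.mem_image_of_mem f hp.1.1)]
  refine Finset.sum_congr rfl fun x _ => ?_
  rw [Finset.filter_filter]
  have h1 : ((T ×ˢ T).filter (fun p => (f p.1 = f p.2) ∧ f p.1 = x))
      = ((T ×ˢ T).filter (fun p => (f p.1 = x) ∧ f p.2 = x)) := by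
    apply Finset.filter_congr
    intro p _
    constructor
    · rintro ⟨h, h'⟩; exact ⟨h', h ▸ h'⟩
    · rintro ⟨h, h'⟩; exact ⟨h.trans h'.symm, h⟩
  rw [h1, Finset.filter_product (fun a => f a = x) (fun a => f a = x), Finset.card_product]
  ring
noncomputable def QQ (e : ℝ) (A : Finset ℝ) (s : ℝ) : ℕ :=
  (((AS A s ×ˢ A) ×ˢ (AS A s ×ˢ A)).filter
    (fun p => p.1.1 + e * p.1.2 = p.2.1 + e * p.2.2)).card

lemma per_s_nat (A : Finset ℝ) (e : ℝ) (SB : Finset ℝ)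
    (hSB : ∀ a c, a ∈ A → c ∈ A → a + e * c ∈ SB) (s : ℝ) :
    ((AS A s).card * A.card)^2 ≤ dXY SB SB s * QQ e A s := by
  classical
  have h1 : (AS A s).card * A.card
      = ∑ x ∈ (AS A s ×ˢ A).image (fun p => p.1 + e * p.2),
          ((AS A s ×ˢ A).filter (fun t => t.1 + e * t.2 = x)).card := by
    rw [← Finset.card_product, Finset.card_eq_sum_card_image (fun p : ℝ × ℝ => p.1 + e * p.2)]
  have h2 : ∑ x ∈ (AS A s ×ˢ A).image (fun p => p.1 + e * p.2),
      (((AS A s ×ˢ A).filter (fun t => t.1 + e * t.2 = x)).card)^2 = QQ e A s := by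
    rw [sum_sq_fibers (AS A s ×ˢ A) (fun p => p.1 + e * p.2)]
    rfl
  have h3 : ((AS A s ×ˢ A).image (fun p => p.1 + e * p.2)).card ≤ dXY SB SB s := by
    rw [dXY]
    apply Finset.card_le_card_of_injOn (fun x => (x, x - s))
    · intro x hx
      rw [Finset.mem_coe, Finset.mem_image] at hx
      obtain ⟨p, hp, hpx⟩ := hx
      rw [Finset.mem_product] at hp
      obtain ⟨ha, hc⟩ := hp
      rw [mem_AS] at ha
      simp only [Finset.mem_coe, Finset.mem_filter, Finset.mem_product]
      refine ⟨⟨?_, ?_⟩, by ring⟩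
      · rw [← hpx]; exact hSB p.1 p.2 ha.1 hc
      · rw [← hpx]
        have he : p.1 + e * p.2 - s = (p.1 - s) + e * p.2 := by ring
        rw [he]
        exact hSB (p.1 - s) p.2 ha.2 hc
    · intro x _ y _ h
      exact congrArg Prod.fst h
  have hcs : (∑ x ∈ (AS A s ×ˢ A).image (fun p => p.1 + e * p.2),
        ((AS A s ×ˢ A).filter (fun t => t.1 + e * t.2 = x)).card)^2
      ≤ ((AS A s ×ˢ A).image (fun p => p.1 + e * p.2)).card
        * ∑ x ∈ (AS A s ×ˢ A).image (fun p => p.1 + e * p.2),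
            (((AS A s ×ˢ A).filter (fun t => t.1 + e * t.2 = x)).card)^2 := by
    have h := Finset.sum_mul_sq_le_sq_mul_sq
      ((AS A s ×ˢ A).image (fun p => p.1 + e * p.2)) (fun _ => (1:ℕ))
      (fun x => ((AS A s ×ˢ A).filter (fun t => t.1 + e * t.2 = x)).card)
    simpa using h
  calc ((AS A s).card * A.card)^2
      = (∑ x ∈ (AS A s ×ˢ A).image (fun p => p.1 + e * p.2),
          ((AS A s ×ˢ A).filter (fun t => t.1 + e * t.2 = x)).card)^2 := by rw [h1]
    _ ≤ ((AS A s ×ˢ A).image (fun p => p.1 + e * p.2)).card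
        * ∑ x ∈ (AS A s ×ˢ A).image (fun p => p.1 + e * p.2),
            (((AS A s ×ˢ A).filter (fun t => t.1 + e * t.2 = x)).card)^2 := hcs
    _ ≤ dXY SB SB s * QQ e A s := by
        rw [h2]
        exact Nat.mul_le_mul_right _ h3

lemma Qrep (A : Finset ℝ) (e : ℝ) (he2 : e * e = 1) (s : ℝ) :
    QQ e A s = ∑ a ∈ AS A s, ∑ a' ∈ AS A s, dXY A A (e * (a' - a)) := by
  classical
  rw [QQ, Finset.card_filter, Finset.sum_product]
  have hx : ∀ x : ℝ × ℝ, ∑ y ∈ AS A s ×ˢ A,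
      (if x.1 + e * x.2 = y.1 + e * y.2 then (1:ℕ) else 0)
      = ∑ a' ∈ AS A s, ∑ c' ∈ A, (if x.1 + e * x.2 = a' + e * c' then (1:ℕ) else 0) := by
    intro x; rw [Finset.sum_product]
  rw [Finset.sum_congr rfl (fun x _ => hx x), Finset.sum_product]
  refine Finset.sum_congr rfl fun a _ => ?_
  rw [Finset.sum_comm]
  refine Finset.sum_congr rfl fun a' _ => ?_
  rw [dxy_pair]
  refine Finset.sum_congr rfl fun c _ => Finset.sum_congr rfl fun c' _ => ?_
  refine if_congr ⟨fun h => by linear_combination e*h - (c - c')*he2,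
    fun h => by linear_combination e*h + (a' - a)*he2⟩ rfl rfl

lemma count_s_le (A : Finset ℝ) (a a' : ℝ) :
    ((A - A).filter (fun s => a - s ∈ A ∧ a' - s ∈ A)).card ≤ dXY A A (a - a') := by
  rw [dXY]
  apply Finset.card_le_card_of_injOn (fun s => (a - s, a' - s))
  · intro s hs
    rw [Finset.mem_coe, Finset.mem_filter] at hs
    simp only [Finset.mem_coe, Finset.mem_filter, Finset.mem_product]
    exact ⟨⟨hs.2.1, hs.2.2⟩, by ring⟩
  · intro s _ s' _ h
    have := congrArg Prod.fst h
    simp only at this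
    linarith

lemma sum_pairs (A : Finset ℝ) (g : ℝ → ℕ) :
    ∑ a ∈ A, ∑ b ∈ A, g (a - b) = ∑ t ∈ A - A, dXY A A t * g t := by
  classical
  rw [← Finset.sum_product' (f := fun a b => g (a - b))]
  rw [← Finset.sum_fiberwise_of_maps_to (g := fun p : ℝ × ℝ => p.1 - p.2) (t := A - A)
    (fun p hp => by
      rw [Finset.mem_product] at hp
      exact Finset.sub_mem_sub hp.1 hp.2) (fun p => g (p.1 - p.2))]
  refine Finset.sum_congr rfl fun t ht => ?_
  have : ∀ p ∈ (A ×ˢ A).filter (fun p : ℝ × ℝ => p.1 - p.2 = t), g (p.1 - p.2) = g t := by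
    intro p hp
    rw [Finset.mem_filter] at hp
    rw [hp.2]
  rw [Finset.sum_congr rfl this, Finset.sum_const, smul_eq_mul, dXY]

lemma sumQ_le (A : Finset ℝ) (e : ℝ) (he : e = 1 ∨ e = -1) :
    ∑ s ∈ A - A, QQ e A s ≤ ∑ t ∈ A - A, (dXY A A t)^3 := by
  classical
  have he2 : e * e = 1 := by rcases he with h | h <;> rw [h] <;> norm_num
  have hF : ∀ a a' : ℝ, dXY A A (e * (a' - a)) = dXY A A (a - a') := by
    intro a a'
    rcases he with h | h
    · rw [h, one_mul, show a' - a = -(a - a') by ring, dxy_neg]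
    · rw [h, show (-1 : ℝ) * (a' - a) = a - a' by ring]
  calc ∑ s ∈ A - A, QQ e A s
      = ∑ s ∈ A - A, ∑ a ∈ A, ∑ a' ∈ A,
          (if a - s ∈ A ∧ a' - s ∈ A then dXY A A (a - a') else 0) := by
        refine Finset.sum_congr rfl fun s _ => ?_
        rw [Qrep A e he2 s, AS, Finset.sum_filter]
        refine Finset.sum_congr rfl fun a _ => ?_
        rw [Finset.sum_filter]
        by_cases hp : a - s ∈ A
        · simp only [hp, if_true, true_and]
          refine Finset.sum_congr rfl fun a' _ => ?_
          rw [hF a a']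
        · simp [hp]
    _ = ∑ a ∈ A, ∑ a' ∈ A,
          (((A - A).filter (fun s => a - s ∈ A ∧ a' - s ∈ A)).card * dXY A A (a - a')) := by
        rw [Finset.sum_comm]
        refine Finset.sum_congr rfl fun a _ => ?_
        rw [Finset.sum_comm]
        refine Finset.sum_congr rfl fun a' _ => ?_
        rw [← Finset.sum_filter, Finset.sum_const, smul_eq_mul]
    _ ≤ ∑ a ∈ A, ∑ a' ∈ A, dXY A A (a - a') * dXY A A (a - a') := by
        refine Finset.sum_le_sum fun a _ => Finset.sum_le_sum fun a' _ => ?_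
        exact Nat.mul_le_mul_right _ (count_s_le A a a')
    _ = ∑ t ∈ A - A, dXY A A t * (dXY A A t * dXY A A t) :=
        sum_pairs A (fun t => dXY A A t * dXY A A t)
    _ = ∑ t ∈ A - A, (dXY A A t)^3 := by
        refine Finset.sum_congr rfl fun t _ => by ring
lemma energy15_nonneg (A : Finset ℝ) : 0 ≤ energy15 A :=
  Finset.sum_nonneg fun s _ => Real.rpow_nonneg (Nat.cast_nonneg _) _

lemma energy_nonneg (A B : Finset ℝ) : 0 ≤ energy A B :=
  Finset.sum_nonneg fun s _ => by positivity

lemma main_ineq (A : Finset ℝ) (e : ℝ) (he : e = 1 ∨ e = -1) (SB : Finset ℝ)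
    (hSB : ∀ a c, a ∈ A → c ∈ A → a + e * c ∈ SB) :
    (energy15 A * (A.card : ℝ))^2 ≤ energy A SB * energy3 A := by
  classical
  have hstep : ∀ s ∈ A - A,
      (dXY A A s : ℝ) ^ ((3:ℝ)/2) * (A.card : ℝ)
        ≤ Real.sqrt ((dXY A A s : ℝ) * (dXY SB SB s : ℝ)) * Real.sqrt (QQ e A s : ℝ) := by
    intro s hs
    have hd1 : (1:ℝ) ≤ (dXY A A s : ℝ) := by exact_mod_cast one_le_dxy hs
    have hd0 : (0:ℝ) < (dXY A A s : ℝ) := by linarith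
    have hps : ((dXY A A s : ℝ) * (A.card : ℝ))^2
        ≤ (dXY SB SB s : ℝ) * (QQ e A s : ℝ) := by
      have h := per_s_nat A e SB hSB s
      rw [← dxy_card] at h
      exact_mod_cast h
    have h32 : (dXY A A s : ℝ) ^ ((3:ℝ)/2)
        = Real.sqrt (dXY A A s) * (dXY A A s : ℝ) := by
      rw [show (3:ℝ)/2 = 1/2 + 1 by norm_num, Real.rpow_add hd0, Real.rpow_one,
        Real.sqrt_eq_rpow]
    have hdn : (dXY A A s : ℝ) * (A.card : ℝ)
        ≤ Real.sqrt ((dXY SB SB s : ℝ) * (QQ e A s : ℝ)) :=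
      (Real.le_sqrt (by positivity) (by positivity)).2 hps
    calc (dXY A A s : ℝ) ^ ((3:ℝ)/2) * (A.card : ℝ)
        = Real.sqrt (dXY A A s) * ((dXY A A s : ℝ) * (A.card : ℝ)) := by rw [h32]; ring
      _ ≤ Real.sqrt (dXY A A s) * Real.sqrt ((dXY SB SB s : ℝ) * (QQ e A s : ℝ)) :=
          mul_le_mul_of_nonneg_left hdn (Real.sqrt_nonneg _)
      _ = Real.sqrt ((dXY A A s : ℝ) * (dXY SB SB s : ℝ)) * Real.sqrt (QQ e A s : ℝ) := by
          rw [← Real.sqrt_mul hd0.le, ← Real.sqrt_mul (by positivity), mul_assoc]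
  have hsum : energy15 A * (A.card : ℝ)
      ≤ ∑ s ∈ A - A, Real.sqrt ((dXY A A s : ℝ) * (dXY SB SB s : ℝ)) * Real.sqrt (QQ e A s : ℝ) := by
    rw [energy15, Finset.sum_mul]
    exact Finset.sum_le_sum hstep
  have hcs := Finset.sum_mul_sq_le_sq_mul_sq (A - A)
      (fun s => Real.sqrt ((dXY A A s : ℝ) * (dXY SB SB s : ℝ)))
      (fun s => Real.sqrt (QQ e A s : ℝ))
  have h1 : ∑ s ∈ A - A, (Real.sqrt ((dXY A A s : ℝ) * (dXY SB SB s : ℝ)))^2 = energy A SB := by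
    rw [energy]
    exact Finset.sum_congr rfl fun s _ => Real.sq_sqrt (by positivity)
  have h2 : ∑ s ∈ A - A, (Real.sqrt ((QQ e A s : ℝ)))^2 = ∑ s ∈ A - A, (QQ e A s : ℝ) :=
    Finset.sum_congr rfl fun s _ => Real.sq_sqrt (by positivity)
  have h3 : (∑ s ∈ A - A, (QQ e A s : ℝ)) ≤ energy3 A := by
    rw [energy3]
    have h := sumQ_le A e he
    calc (∑ s ∈ A - A, (QQ e A s : ℝ)) = ((∑ s ∈ A - A, QQ e A s : ℕ) : ℝ) := by push_cast; rfl
      _ ≤ ((∑ t ∈ A - A, (dXY A A t)^3 : ℕ) : ℝ) := by exact_mod_cast h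
      _ = ∑ t ∈ A - A, (dXY A A t : ℝ)^3 := by push_cast; rfl
  calc (energy15 A * (A.card : ℝ))^2
      ≤ (∑ s ∈ A - A, Real.sqrt ((dXY A A s : ℝ) * (dXY SB SB s : ℝ)) * Real.sqrt (QQ e A s : ℝ))^2 := by
        apply pow_le_pow_left₀ (mul_nonneg (energy15_nonneg A) (Nat.cast_nonneg _)) hsum
    _ ≤ energy A SB * (∑ s ∈ A - A, (QQ e A s : ℝ)) := by
        rw [← h1, ← h2]; exact hcs
    _ ≤ energy A SB * energy3 A :=
        mul_le_mul_of_nonneg_left h3 (energy_nonneg A SB)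

theorem stmt19 (K K' : ℝ) (hK : K ≥ 1) (hK' : K' ≥ 1) :
    ∃ c : ℝ, c > 0 ∧ ∀ A : Finset ℝ, 2 ≤ A.card →
      energy3 A ≤ K * (A.card : ℝ) ^ 3 * Real.logb 2 (A.card : ℝ) →
      energy15 A ^ 2 ≥ (A.card : ℝ) ^ 6 / ((A - A).card : ℝ) →
      (∀ B : Finset ℝ, energy A B ≤ K' * (A.card : ℝ) * (B.card : ℝ) ^ ((3 : ℝ) / 2)) →
      (((A - A).card : ℝ) ^ 2 * ((A + A).card : ℝ) ^ 3 ≥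
          c * (A.card : ℝ) ^ 8 / Real.logb 2 (A.card : ℝ) ^ 2 ∧
       ((A - A).card : ℝ) ^ 2 * ((A - A).card : ℝ) ^ 3 ≥
          c * (A.card : ℝ) ^ 8 / Real.logb 2 (A.card : ℝ) ^ 2) := by
  have hKK' : (0:ℝ) < K * K' := by nlinarith
  refine ⟨((K * K') ^ 2)⁻¹, by positivity, ?_⟩
  intro A hcard h3 h15 hB
  set n : ℝ := (A.card : ℝ) with hn
  have hn2 : (2:ℝ) ≤ n := by rw [hn]; exact_mod_cast hcard
  have hn0 : (0:ℝ) < n := by linarith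
  set L : ℝ := Real.logb 2 n with hLdef
  have hL1 : (1:ℝ) ≤ L := by
    rw [hLdef, show (1:ℝ) = Real.logb 2 2 from (Real.logb_self_eq_one (by norm_num)).symm]
    exact Real.logb_le_logb_of_le (by norm_num) (by norm_num) hn2
  have hL0 : (0:ℝ) < L := by linarith
  have hA : A.Nonempty := Finset.card_pos.1 (by omega)
  have hdd : (0:ℝ) < ((A - A).card : ℝ) := by
    exact_mod_cast Finset.card_pos.2 (hA.sub hA)
  have hE3 : (0:ℝ) ≤ energy3 A := Finset.sum_nonneg fun s _ => by positivity
  have main : ∀ (e : ℝ), e = 1 ∨ e = -1 → ∀ SB : Finset ℝ,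
      (∀ a c, a ∈ A → c ∈ A → a + e * c ∈ SB) →
      ((A - A).card : ℝ) ^ 2 * ((SB).card : ℝ) ^ 3 ≥ ((K * K') ^ 2)⁻¹ * n ^ 8 / L ^ 2 := by
    intro e he SB hSB
    have hMI := main_ineq A e he SB hSB
    have hE := hB SB
    set dd : ℝ := ((A - A).card : ℝ) with hdddef
    set sb : ℝ := ((SB).card : ℝ) with hsbdef
    set X : ℝ := sb ^ ((3:ℝ)/2) with hXdef
    have hsb0 : (0:ℝ) ≤ sb := Nat.cast_nonneg _
    have hX0 : (0:ℝ) ≤ X := Real.rpow_nonneg hsb0 _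
    have hX2 : X ^ 2 = sb ^ 3 := by
      rw [hXdef, ← Real.rpow_natCast (sb ^ ((3:ℝ)/2)) 2, ← Real.rpow_mul hsb0,
        ← Real.rpow_natCast sb 3]
      norm_num
    have hprod : energy A SB * energy3 A ≤ (K' * n * X) * (K * n ^ 3 * L) := by
      apply mul_le_mul hE h3 hE3
      have : (0:ℝ) ≤ K' := by linarith
      positivity
    have key : n ^ 6 / dd * n ^ 2 ≤ K * K' * n ^ 4 * L * X := by
      calc n ^ 6 / dd * n ^ 2 ≤ energy15 A ^ 2 * n ^ 2 := by
            apply mul_le_mul_of_nonneg_right h15 (by positivity)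
        _ = (energy15 A * n) ^ 2 := by ring
        _ ≤ energy A SB * energy3 A := hMI
        _ ≤ (K' * n * X) * (K * n ^ 3 * L) := hprod
        _ = K * K' * n ^ 4 * L * X := by ring
    have key' : n ^ 8 ≤ K * K' * n ^ 4 * L * X * dd := by
      rw [show n ^ 6 / dd * n ^ 2 = n ^ 8 / dd by field_simp] at key
      calc n ^ 8 = n ^ 8 / dd * dd := by field_simp
        _ ≤ K * K' * n ^ 4 * L * X * dd := mul_le_mul_of_nonneg_right key hdd.le
    have key2 : n ^ 8 * n ^ 8 ≤ ((K * K') ^ 2 * L ^ 2 * X ^ 2 * dd ^ 2) * n ^ 8 :=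
      (mul_self_le_mul_self (by positivity) key').trans_eq (by ring)
    have key4 : n ^ 8 ≤ (K * K') ^ 2 * L ^ 2 * X ^ 2 * dd ^ 2 :=
      le_of_mul_le_mul_right key2 (by positivity)
    rw [ge_iff_le, div_le_iff₀ (by positivity : (0:ℝ) < L ^ 2)]
    calc ((K * K') ^ 2)⁻¹ * n ^ 8
        ≤ ((K * K') ^ 2)⁻¹ * ((K * K') ^ 2 * L ^ 2 * X ^ 2 * dd ^ 2) :=
          mul_le_mul_of_nonneg_left key4 (by positivity)
      _ = L ^ 2 * X ^ 2 * dd ^ 2 := by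
          field_simp
      _ = dd ^ 2 * sb ^ 3 * L ^ 2 := by rw [hX2]; ring
  constructor
  · exact main 1 (Or.inl rfl) (A + A) (fun a c ha hc => by
      rw [one_mul]; exact Finset.add_mem_add ha hc)
  · exact main (-1) (Or.inr rfl) (A - A) (fun a c ha hc => by
      rw [neg_one_mul, ← sub_eq_add_neg]; exact Finset.sub_mem_sub ha hc)
end
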